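/- arXiv:1302.0475 — 2 statements merged into one kernel-verified Lean document; each statement's English description precedes it below -/
import Mathlib

section
/- Let T be the unilateral shift on ℓ²(ℕ) and let S be the operator defined on the orthonormal basis indexed by {1,2} × ℕ of ℓ²(ℕ) ⊕ ℓ²(ℕ) by S(eₙ⁽¹⁾) = eₙ⁽²⁾ and S(eₙ⁽²⁾) = eₙ₊₁⁽¹⁾. Then S is an isometry satisfying S² = T ⊕ T, and consequently S commutes with T ⊕ T. -/
open ContinuousLinearMap in
lemma clm_ext_hilbertBasis {H : Type*} [NormedAddCommGroup H] [InnerProductSpace ℂ H]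
    [CompleteSpace H] {ι : Type*} (b : HilbertBasis ι ℂ H) {f g : H →L[ℂ] H}
    (h : ∀ i, f (b i) = g (b i)) : f = g := by
  refine ContinuousLinearMap.ext_on (s := Set.range b) ?_ ?_
  · have := b.dense_span
    rw [← Submodule.dense_iff_topologicalClosure_eq_top] at this
    exact this
  · rintro x ⟨i, rfl⟩; exact h i

lemma ext_inner_hilbertBasis {H : Type*} [NormedAddCommGroup H] [InnerProductSpace ℂ H]
    [CompleteSpace H] {ι : Type*} (b : HilbertBasis ι ℂ H) {x y : H}
    (h : ∀ i, inner (𝕜 := ℂ) (b i) x = inner (𝕜 := ℂ) (b i) y) : x = y := by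
  have : b.repr x = b.repr y := by
    ext i
    rw [b.repr_apply_apply, b.repr_apply_apply]
    exact h i
  exact b.repr.injective this

open ContinuousLinearMap in
/-- On `H = ℓ²(ℕ) ⊕ ℓ²(ℕ)` with Hilbert basis `b (i, n)` (`i ∈ Fin 2`), the operator `S`
with `S b(0,n) = b(1,n)`, `S b(1,n) = b(0,n+1)` is an isometry with `S² = T ⊕ T` (the
latter being the operator `P` with `P b(i,n) = b(i,n+1)`), hence `S` commutes with `T ⊕ T`. -/
theorem stmt_7 {H : Type*} [NormedAddCommGroup H] [InnerProductSpace ℂ H] [CompleteSpace H]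
    (b : HilbertBasis (Fin 2 × ℕ) ℂ H) (S P : H →L[ℂ] H)
    (hS0 : ∀ n : ℕ, S (b (0, n)) = b (1, n))
    (hS1 : ∀ n : ℕ, S (b (1, n)) = b (0, n + 1))
    (hP : ∀ (i : Fin 2) (n : ℕ), P (b (i, n)) = b (i, n + 1)) :
    (∀ x : H, ‖S x‖ = ‖x‖) ∧ S ∘L S = P ∧ S ∘L P = P ∘L S := by
  have hS : ∀ p : Fin 2 × ℕ, S (b p) =
      b (if p.1 = 0 then (1, p.2) else (0, p.2 + 1)) := by
    rintro ⟨i, n⟩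
    fin_cases i
    · simpa using hS0 n
    · simpa using hS1 n
  have horth := b.orthonormal
  rw [orthonormal_iff_ite] at horth
  have hadj : adjoint S ∘L S = 1 := by
    refine clm_ext_hilbertBasis b fun i => ?_
    refine ext_inner_hilbertBasis b fun j => ?_
    rw [ContinuousLinearMap.comp_apply, ContinuousLinearMap.adjoint_inner_right,
      hS i, hS j, ContinuousLinearMap.one_apply, horth, horth]
    congr 1
    rcases i with ⟨i1, i2⟩; rcases j with ⟨j1, j2⟩
    fin_cases i1 <;> fin_cases j1 <;> simp [Prod.ext_iff]
  have hinner : ∀ x : H, inner (𝕜 := ℂ) (S x) (S x) = inner (𝕜 := ℂ) x x := by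
    intro x
    have : inner (𝕜 := ℂ) x ((adjoint S ∘L S) x) = inner (𝕜 := ℂ) x x := by
      rw [hadj]; rfl
    rwa [ContinuousLinearMap.comp_apply, ContinuousLinearMap.adjoint_inner_right] at this
  refine ⟨fun x => ?_, ?_, ?_⟩
  · rw [@norm_eq_sqrt_re_inner ℂ, @norm_eq_sqrt_re_inner ℂ _ _ _ _ x, hinner]
  · refine clm_ext_hilbertBasis b fun i => ?_
    rcases i with ⟨i, n⟩
    fin_cases i
    · simp [hS0, hS1, hP]
    · simp [hS0, hS1, hP]
  · refine clm_ext_hilbertBasis b fun i => ?_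
    rcases i with ⟨i, n⟩
    fin_cases i
    · simp [hS0, hS1, hP]
    · simp [hS0, hS1, hP]
end

section
/- With S and π(1) = T ⊕ T as above (S² = π(1)), the adjoints satisfy S*π(1)* = π(1)*S*, but S*π(1) ≠ π(1)S* and Sπ(1)* ≠ π(1)*S. -/
open scoped InnerProductSpace

lemma hb_ext {H : Type*} [NormedAddCommGroup H] [InnerProductSpace ℂ H] [CompleteSpace H]
    {ι : Type*} (b : HilbertBasis ι ℂ H) {x y : H}
    (h : ∀ i, (⟪b i, x⟫_ℂ) = ⟪b i, y⟫_ℂ) : x = y := by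
  apply b.repr.injective
  ext i
  simpa [HilbertBasis.repr_apply_apply] using h i

open ContinuousLinearMap in
/-- With `S` as above and `π(1) = P = S²` the doubled shift, the adjoints satisfy
`S* P* = P* S*`, but `S* P ≠ P S*` and `S P* ≠ P* S`. -/
theorem stmt_8 {H : Type*} [NormedAddCommGroup H] [InnerProductSpace ℂ H] [CompleteSpace H]
    (b : HilbertBasis (Fin 2 × ℕ) ℂ H) (S P : H →L[ℂ] H)
    (hS0 : ∀ n : ℕ, S (b (0, n)) = b (1, n))
    (hS1 : ∀ n : ℕ, S (b (1, n)) = b (0, n + 1))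
    (hP : ∀ (i : Fin 2) (n : ℕ), P (b (i, n)) = b (i, n + 1)) :
    adjoint S ∘L adjoint P = adjoint P ∘L adjoint S ∧
    adjoint S ∘L P ≠ P ∘L adjoint S ∧
    S ∘L adjoint P ≠ adjoint P ∘L S := by
  have hon := b.orthonormal
  have hSapp : ∀ i : Fin 2 × ℕ, S (b i) = if i.1 = 0 then b (1, i.2) else b (0, i.2 + 1) := by
    rintro ⟨i, n⟩
    fin_cases i <;> simp [hS0, hS1]
  -- P = S ∘L S
  have hPS : P = S ∘L S := by
    have hd : Dense (Submodule.span ℂ (Set.range b) : Set H) :=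
      Submodule.dense_iff_topologicalClosure_eq_top.mpr b.dense_span
    refine ContinuousLinearMap.ext_on hd ?_
    rintro _ ⟨⟨i, n⟩, rfl⟩
    fin_cases i <;> simp [hP, hS0, hS1]
  have hb10 : b (1, 0) ≠ 0 := hon.ne_zero _
  have hb00 : b (0, 0) ≠ 0 := hon.ne_zero _
  -- adjoint S on b (0,0) is 0
  have hadjS00 : adjoint S (b (0, 0)) = 0 := by
    apply hb_ext b
    intro i
    rw [ContinuousLinearMap.adjoint_inner_right, hSapp i]
    have := hon
    rw [orthonormal_iff_ite] at this
    split <;> simp [this]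
  -- adjoint S on b (0,1) is b (1,0)
  have hadjS01 : adjoint S (b (0, 1)) = b (1, 0) := by
    apply hb_ext b
    intro i
    rw [ContinuousLinearMap.adjoint_inner_right, hSapp i]
    have h2 := hon
    rw [orthonormal_iff_ite] at h2
    obtain ⟨j, n⟩ := i
    fin_cases j <;> simp [h2, Prod.ext_iff]
  -- adjoint P on b (1,0) is 0
  have hadjP10 : adjoint P (b (1, 0)) = 0 := by
    apply hb_ext b
    intro i
    rw [ContinuousLinearMap.adjoint_inner_right, hP i.1 i.2]
    have h2 := hon
    rw [orthonormal_iff_ite] at h2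
    simp [h2, Prod.ext_iff]
  -- adjoint P on b (0,1) is b (0,0)
  have hadjP01 : adjoint P (b (0, 1)) = b (0, 0) := by
    apply hb_ext b
    intro i
    rw [ContinuousLinearMap.adjoint_inner_right, hP i.1 i.2]
    have h2 := hon
    rw [orthonormal_iff_ite] at h2
    obtain ⟨j, n⟩ := i
    simp [h2, Prod.ext_iff]
  refine ⟨?_, ?_, ?_⟩
  · rw [hPS, ContinuousLinearMap.adjoint_comp, ContinuousLinearMap.comp_assoc]
  · intro h
    have := ContinuousLinearMap.ext_iff.mp h (b (0, 0))
    simp only [ContinuousLinearMap.comp_apply] at this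
    rw [hP 0 0, hadjS01, hadjS00, map_zero] at this
    exact hb10 this
  · intro h
    have := ContinuousLinearMap.ext_iff.mp h (b (1, 0))
    simp only [ContinuousLinearMap.comp_apply] at this
    rw [hadjP10, map_zero, hS1 0, hadjP01] at this
    exact hb00 this.symm
end
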